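/- Fix d ≥ 1, β ≥ 0 and n ∈ ℕ, and assume (as guaranteed by the Lee–Yang circle theorem) that all |Λ_n| roots of P_n lie on the unit circle. Then m_{Λ_n} is a Herglotz function on the open unit disk 𝔻: Re m_{Λ_n}(z) > 0 for every z ∈ 𝔻, m_{Λ_n}(0) = 1, and |m_{Λ_n}(z)| ≤ (1+r)/(1−r) whenever |z| ≤ r < 1. -/

import Mathlib

open MeasureTheory Filter Topology
open scoped ENNReal

noncomputable section

/-- The box `Λ_n = [-n,n]^d ∩ ℤ^d`. -/
def Lam (d n : ℕ) : Finset (Fin d → ℤ) :=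
  Finset.Icc (fun _ => -(n : ℤ)) (fun _ => (n : ℤ))

/-- Spin configurations on `Λ_n` (a `Bool` per site; `true ↦ +1`, `false ↦ -1`). -/
abbrev Config (d n : ℕ) := {x // x ∈ Lam d n} → Bool

/-- The ±1 spin value at a site. -/
def spin {d n : ℕ} (σ : Config d n) (u : {x // x ∈ Lam d n}) : ℝ :=
  if σ u then 1 else -1

/-- ℓ¹ distance on `ℤ^d`. -/
def dist1 {d : ℕ} (u v : Fin d → ℤ) : ℤ := ∑ i, |u i - v i|

/-- `Σ_{{u,v} ∈ E_n} σ_u σ_v`, the sum over (unordered) nearest-neighbour edges of `Λ_n`. -/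
def edgeSum (d n : ℕ) (σ : Config d n) : ℝ :=
  (1 / 2) * ∑ u : {x // x ∈ Lam d n}, ∑ v : {x // x ∈ Lam d n},
    (if dist1 (u : Fin d → ℤ) (v : Fin d → ℤ) = 1 then spin σ u * spin σ v else 0)

/-- The number `|E_n|` of nearest-neighbour edges of `Λ_n`. -/
def nEdges (d n : ℕ) : ℕ :=
  (Finset.univ.filter
    (fun p : {x // x ∈ Lam d n} × {x // x ∈ Lam d n} =>
      dist1 (p.1 : Fin d → ℤ) (p.2 : Fin d → ℤ) = 1)).card / 2

/-- Total magnetization `Y_n(σ) = Σ_{u ∈ Λ_n} σ_u`. -/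
def Ymag {d n : ℕ} (σ : Config d n) : ℝ := ∑ u, spin σ u

/-- Free boundary condition Ising expectation `⟨f⟩_{Λ_n,β}` (zero external field). -/
def ev (d n : ℕ) (β : ℝ) (f : Config d n → ℝ) : ℝ :=
  (∑ σ : Config d n, f σ * Real.exp (β * edgeSum d n σ)) /
    (∑ σ : Config d n, Real.exp (β * edgeSum d n σ))

/-- The spin at a point of `ℤ^d` (zero if the point is outside `Λ_n`). -/
def spinAt {d n : ℕ} (σ : Config d n) (x : Fin d → ℤ) : ℝ :=
  if h : x ∈ Lam d n then spin σ ⟨x, h⟩ else 0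

/-- The finite-volume two-point function `⟨σ_0 σ_x⟩_{Λ_n,β}`. -/
def twoPoint (d n : ℕ) (β : ℝ) (x : Fin d → ℤ) : ℝ :=
  ev d n β (fun σ => spinAt σ 0 * spinAt σ x)

/-- The critical inverse temperature
`β_c(d) = sup {β ≥ 0 : Σ_{x ∈ ℤ^d} lim_n ⟨σ_0 σ_x⟩_{Λ_n,β} < ∞}`. -/
def betac (d : ℕ) : ℝ :=
  sSup {β : ℝ | 0 ≤ β ∧ ∃ g : (Fin d → ℤ) → ℝ, Summable g ∧
    ∀ x, Tendsto (fun n => twoPoint d n β x) atTop (𝓝 (g x))}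

/-- The second moment `⟨Y_n²⟩_{Λ_n,β}`. -/
def varY (d n : ℕ) (β : ℝ) : ℝ := ev d n β (fun σ => (Ymag σ) ^ 2)

/-- The fourth cumulant `u₄(Y_n) = ⟨Y_n⁴⟩ - 3⟨Y_n²⟩²`. -/
def u4 (d n : ℕ) (β : ℝ) : ℝ :=
  ev d n β (fun σ => (Ymag σ) ^ 4) - 3 * (varY d n β) ^ 2

/-- Expectation `E_{Λ_n,β}[f(X_n)]` in the model perturbed by the critical
Curie–Weiss interaction, i.e. with Hamiltonian
`-β Σ σ_uσ_v - Y_n²/(2⟨Y_n²⟩_{Λ_n,β})`. -/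
def evX (d n : ℕ) (β : ℝ) (f : ℝ → ℝ) : ℝ :=
  (∑ σ : Config d n, f (Ymag σ) *
      Real.exp (β * edgeSum d n σ + (Ymag σ) ^ 2 / (2 * varY d n β))) /
    (∑ σ : Config d n,
      Real.exp (β * edgeSum d n σ + (Ymag σ) ^ 2 / (2 * varY d n β)))

/-- The Ising probability measure on configurations. -/
def isingMeasure (d n : ℕ) (β : ℝ) : Measure (Config d n) :=
  ∑ σ : Config d n,
    (ENNReal.ofReal (Real.exp (β * edgeSum d n σ) /
      ∑ τ : Config d n, Real.exp (β * edgeSum d n τ))) • Measure.dirac σ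

/-- The probability measure of the Curie–Weiss–perturbed Ising model. -/
def pertMeasure (d n : ℕ) (β : ℝ) : Measure (Config d n) :=
  ∑ σ : Config d n,
    (ENNReal.ofReal (Real.exp (β * edgeSum d n σ + (Ymag σ) ^ 2 / (2 * varY d n β)) /
      ∑ τ : Config d n,
        Real.exp (β * edgeSum d n τ + (Ymag τ) ^ 2 / (2 * varY d n β)))) • Measure.dirac σ

/-- The distribution of the total magnetization `Y_n`. -/
def lawY (d n : ℕ) (β : ℝ) : Measure ℝ := (isingMeasure d n β).map Ymag

/-- The distribution of `Y_n/√⟨Y_n²⟩_{Λ_n,β}`. -/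
def lawYnorm (d n : ℕ) (β : ℝ) : Measure ℝ :=
  (lawY d n β).map (fun x => x / Real.sqrt (varY d n β))

/-- The distribution of `X_n`, the total magnetization of the perturbed model. -/
def lawX (d n : ℕ) (β : ℝ) : Measure ℝ := (pertMeasure d n β).map Ymag

/-- The distribution of `X_n/√(E_{Λ_n,β}(X_n²))`. -/
def lawXnorm (d n : ℕ) (β : ℝ) : Measure ℝ :=
  (lawX d n β).map (fun x => x / Real.sqrt (evX d n β (fun y => y ^ 2)))

/-- The distribution of `W_n = X_n + √λ_n N(0,1)`, with `λ_n = ⟨Y_n²⟩_{Λ_n,β}` and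
`N(0,1)` a standard normal independent of `X_n`. -/
def lawW (d n : ℕ) (β : ℝ) : Measure ℝ :=
  ((lawX d n β).prod (ProbabilityTheory.gaussianReal 0 (Real.toNNReal (varY d n β)))).map
    (fun p => p.1 + p.2)

/-- `d_n = ⟨Y_n²⟩⁻¹ (-u₄(Y_n)/4!)^{1/4}`. -/
def dcoef (d n : ℕ) (β : ℝ) : ℝ :=
  (1 / varY d n β) * (-(u4 d n β) / 24) ^ ((1 : ℝ) / 4)

/-- `c_n = √⟨Y_n²⟩/(√(2π) ⟨exp(Y_n²/(2⟨Y_n²⟩))⟩) · (4!/(-u₄(Y_n)))^{1/4}`. -/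
def ccoef (d n : ℕ) (β : ℝ) : ℝ :=
  (Real.sqrt (varY d n β) /
      (Real.sqrt (2 * Real.pi) *
        ev d n β (fun σ => Real.exp ((Ymag σ) ^ 2 / (2 * varY d n β))))) *
    (24 / (-(u4 d n β))) ^ ((1 : ℝ) / 4)

/-- The distribution of `d_n W_n`. -/
def lawDW (d n : ℕ) (β : ℝ) : Measure ℝ := (lawW d n β).map (fun x => dcoef d n β * x)

/-- The distribution of `W̃_n = W_n/√(E_{Λ_n,β}(X_n²))`. -/
def lawWtilde (d n : ℕ) (β : ℝ) : Measure ℝ :=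
  (lawW d n β).map (fun x => x / Real.sqrt (evX d n β (fun y => y ^ 2)))

/-- The moment generating function `z ↦ ⟨exp(zY_n)⟩_{Λ_n,β}` of `Y_n`. -/
def mgfY (d n : ℕ) (β : ℝ) (z : ℂ) : ℂ :=
  (∑ σ : Config d n, Complex.exp (z * (Ymag σ : ℂ)) * (Real.exp (β * edgeSum d n σ) : ℂ)) /
    (∑ σ : Config d n, (Real.exp (β * edgeSum d n σ) : ℂ))

/-- `α : ℕ → ℝ` is the (nondecreasing, with multiplicity) listing of the Lee–Yang
zeros of `⟨exp(zY_n)⟩_{Λ_n,β}`: all its zeros are `{± i α_j : j ≥ 1}` with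
`0 < α_1 ≤ α_2 ≤ ⋯`, and the multiplicity of the zero at `±iα_j` is the number of
indices `k` with `α_k = α_j`. -/
def IsLYListing (d n : ℕ) (β : ℝ) (α : ℕ → ℝ) : Prop :=
  (∀ j, 0 < α j) ∧ Monotone α ∧
    (∀ j, mgfY d n β (Complex.I * (α j : ℂ)) = 0) ∧
    (∀ z : ℂ, mgfY d n β z = 0 →
      ∃ j, z = Complex.I * (α j : ℂ) ∨ z = -(Complex.I * (α j : ℂ))) ∧
    (∀ j, ∀ hA : AnalyticAt ℂ (mgfY d n β) (Complex.I * (α j : ℂ)),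
      analyticOrderAt (mgfY d n β) (Complex.I * (α j : ℂ)) = ({k | α k = α j}.ncard : ℕ∞))

/-- Convergence in distribution (weak convergence of laws on `ℝ`):
integrals of every bounded continuous function converge. -/
def TendstoInDistr (μ : ℕ → Measure ℝ) (ν : Measure ℝ) : Prop :=
  ∀ f : BoundedContinuousFunction ℝ ℝ,
    Tendsto (fun n => ∫ x, f x ∂(μ n)) atTop (𝓝 (∫ x, f x ∂ν))


/-- The partition function `Z_{Λ_n,β,h}` of the Ising model on `Λ_n` with free boundary
conditions and (complex) external field `h`. -/
def Zpart (d n : ℕ) (β : ℝ) (h : ℂ) : ℂ :=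
  ∑ σ : Config d n, Complex.exp ((β * edgeSum d n σ : ℝ) + h * (Ymag σ : ℝ))

/-- `N₋(σ)`, the number of minus spins of the configuration `σ`. -/
def Nminus {d n : ℕ} (σ : Config d n) : ℕ :=
  (Finset.univ.filter (fun u => σ u = false)).card

/-- The average magnetization density `m_{Λ_n}(z) = ⟨Σ_{u∈Λ_n}σ_u⟩_{Λ_n,β,h}/|Λ_n|`
viewed as a rational function of `z = e^{-2h}`. -/
def magDen (d n : ℕ) (β : ℝ) (z : ℂ) : ℂ :=
  (∑ σ : Config d n, (Ymag σ : ℂ) * (Real.exp (β * edgeSum d n σ) : ℂ) * z ^ Nminus σ) /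
    (((Lam d n).card : ℂ) *
      ∑ σ : Config d n, (Real.exp (β * edgeSum d n σ) : ℂ) * z ^ Nminus σ)

/-- `θ : ℕ → ℝ` (restricted to `j < |Λ_n|`) lists, with multiplicity and in nondecreasing
order, the arguments of the `|Λ_n|` roots (all on the unit circle, by the Lee–Yang circle
theorem) of the polynomial `P_n(z) = Σ_σ e^{βΣσσ} z^{N₋(σ)}` associated with the partition
function via `Z_{Λ_n,β,h} = e^{h|Λ_n|} P_n(e^{-2h})`. -/
def IsCircleRootListing (d n : ℕ) (β : ℝ) (θ : ℕ → ℝ) : Prop :=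
  (∀ j, j < (Lam d n).card → 0 < θ j ∧ θ j < 2 * Real.pi) ∧
  (∀ j k, j ≤ k → k < (Lam d n).card → θ j ≤ θ k) ∧
  ∀ z : ℂ, (∑ σ : Config d n, (Real.exp (β * edgeSum d n σ) : ℂ) * z ^ Nminus σ) =
    (Real.exp (β * edgeSum d n (fun _ => false)) : ℂ) *
      ∏ j ∈ Finset.range ((Lam d n).card), (z - Complex.exp (Complex.I * (θ j : ℝ)))

/-- The empirical distribution `μ_n` of the Lee–Yang zeros `exp(iθ_{j,n})`. -/
def empMeasure (d n : ℕ) (θ : ℕ → ℝ) : Measure ℂ :=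
  (((Lam d n).card : ℝ≥0∞))⁻¹ •
    ∑ j ∈ Finset.range ((Lam d n).card), Measure.dirac (Complex.exp (Complex.I * (θ j : ℝ)))

/-- A random variable (here: its law `μ` on `ℝ`) is of Lee–Yang type if it is symmetric,
has a finite Gaussian exponential moment, and its moment generating function has only
pure imaginary zeros. -/
def IsLYType (μ : Measure ℝ) : Prop :=
  μ.map (fun x => -x) = μ ∧
  (∃ D : ℝ, 0 < D ∧ ∫⁻ x, ENNReal.ofReal (Real.exp (D * x ^ 2)) ∂μ < ⊤) ∧
  ∀ z : ℂ, (∫ x : ℝ, Complex.exp (z * (x : ℝ)) ∂μ) = 0 → z.re = 0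

/-- The density `f_W(x) = K e^{-κ₁ x⁴} ∏_{j≥1} (1 + x²/a_j²) e^{-x²/a_j²}` from Theorem 1;
indices `j` with `a_j = ∞` contribute a factor `1` (here `(∞ : ℝ≥0∞).toReal = 0` and
`x²/0 = 0` by convention, so the formula below implements exactly this). -/
def fW (K κ : ℝ) (a : ℕ → ℝ≥0∞) (x : ℝ) : ℝ :=
  K * Real.exp (-(κ * x ^ 4)) *
    ∏' j, ((1 + x ^ 2 / ((a j).toReal) ^ 2) * Real.exp (-(x ^ 2 / ((a j).toReal) ^ 2)))


/-! Write `P(z) = Σ_σ e^{βΣσσ} z^{N₋(σ)} = c ∏_j (z - w_j)` with all `|w_j| = 1`. Since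
`Σ_u σ_u = |Λ_n| - 2N₋(σ)`, the numerator of `m_{Λ_n}` is `|Λ_n| P(z) - 2zP'(z)`, so
`m_{Λ_n}(z) = 1 - (2/|Λ_n|) zP'(z)/P(z)` is the mean of the Cayley kernels `(w_j + z)/(w_j - z)`.
Each kernel has real part `(1 - |z|²)/|w_j - z|² > 0`, equals `1` at `z = 0`, and has modulus
at most `(1 + r)/(1 - r)` on `|z| ≤ r`. -/

open Polynomial

section CayleyKernel

variable {w z : ℂ}

lemma re_add_div_sub (w z : ℂ) :
    ((w + z) / (w - z)).re = (‖w‖ ^ 2 - ‖z‖ ^ 2) / Complex.normSq (w - z) := by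
  rw [Complex.div_re, ← add_div, ← Complex.normSq_eq_norm_sq, ← Complex.normSq_eq_norm_sq]
  simp only [Complex.normSq_apply, Complex.add_re, Complex.add_im, Complex.sub_re,
    Complex.sub_im]
  ring

lemma re_add_div_sub_pos (h : ‖z‖ < ‖w‖) : 0 < ((w + z) / (w - z)).re := by
  have hwz : w - z ≠ 0 := sub_ne_zero.2 fun hwz => h.ne (by rw [hwz])
  rw [re_add_div_sub]
  exact div_pos (by nlinarith [norm_nonneg z]) (Complex.normSq_pos.2 hwz)

lemma norm_add_div_sub_le {r : ℝ} (hz : ‖z‖ ≤ r) (hr : r < ‖w‖) :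
    ‖(w + z) / (w - z)‖ ≤ (‖w‖ + r) / (‖w‖ - r) := by
  rw [norm_div]
  gcongr
  · linarith [norm_nonneg z]
  · exact (norm_add_le w z).trans (by linarith)
  · linarith [norm_sub_norm_le w z]

end CayleyKernel

section Mean

variable {ι : Type*} {s : Finset ι} {f : ι → ℂ}

lemma re_mean_pos (hs : s.Nonempty) (hf : ∀ j ∈ s, 0 < (f j).re) :
    0 < ((s.card : ℂ)⁻¹ * ∑ j ∈ s, f j).re := by
  rw [← Complex.ofReal_natCast, ← Complex.ofReal_inv, Complex.re_ofReal_mul, Complex.re_sum]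
  exact mul_pos (by simpa using hs) (Finset.sum_pos hf hs)

lemma norm_mean_le (hs : s.Nonempty) {C : ℝ} (hf : ∀ j ∈ s, ‖f j‖ ≤ C) :
    ‖(s.card : ℂ)⁻¹ * ∑ j ∈ s, f j‖ ≤ C := by
  have hcard : (0 : ℝ) < s.card := by simpa using hs
  rw [norm_mul, norm_inv, Complex.norm_natCast, inv_mul_le_iff₀ hcard]
  simpa using norm_sum_le_of_le s hf

end Mean

lemma eval_X_mul_derivative_div_eval {K ι : Type*} [Field K] [DecidableEq ι] {a z : K}
    {s : Finset ι} {w : ι → K} (ha : a ≠ 0) (hz : ∀ j ∈ s, z ≠ w j) :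
    (X * derivative (C a * ∏ j ∈ s, (X - C (w j)))).eval z /
        (C a * ∏ j ∈ s, (X - C (w j))).eval z = ∑ j ∈ s, z / (z - w j) := by
  have hzw : ∀ j ∈ s, z - w j ≠ 0 := fun j hj => sub_ne_zero.2 (hz j hj)
  simp only [derivative_C_mul, derivative_prod_finset, derivative_X_sub_C, mul_one, eval_mul,
    eval_X, eval_C, eval_finsetSum, eval_prod, eval_sub]
  rw [mul_left_comm, mul_div_mul_left _ _ ha, Finset.mul_sum, Finset.sum_div]
  refine Finset.sum_congr rfl fun j hj => ?_
  rw [← Finset.mul_prod_erase s _ hj]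
  exact mul_div_mul_right _ _ (Finset.prod_ne_zero_iff.2 fun k hk =>
    hzw k (Finset.mem_of_mem_erase hk))

lemma card_Lam_pos (d n : ℕ) : 0 < (Lam d n).card :=
  Finset.card_pos.2 (Finset.nonempty_Icc.2 fun _ => by simp only; omega)

lemma Ymag_eq_card_sub_two_mul_Nminus {d n : ℕ} (σ : Config d n) :
    Ymag σ = (Lam d n).card - 2 * Nminus σ := by
  classical
  have hspin : ∀ u, spin σ u = 1 - 2 * if σ u = false then 1 else 0 := by
    intro u; unfold spin; cases σ u <;> norm_num
  simp only [Ymag, hspin, Finset.sum_sub_distrib, ← Finset.mul_sum, Finset.sum_boole,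
    Nminus]
  simp

-- `Z_{Λ_n,β,h} = e^{h|Λ_n|} · (partitionPoly d n β).eval (e^{-2h})`
def partitionPoly (d n : ℕ) (β : ℝ) : ℂ[X] :=
  ∑ σ : Config d n, C (Real.exp (β * edgeSum d n σ) : ℂ) * X ^ Nminus σ

section PartitionPoly

variable {d n : ℕ} {β : ℝ}

lemma eval_partitionPoly (z : ℂ) :
    (partitionPoly d n β).eval z =
      ∑ σ : Config d n, (Real.exp (β * edgeSum d n σ) : ℂ) * z ^ Nminus σ := by
  simp [partitionPoly, eval_finsetSum]

lemma eval_X_mul_derivative_partitionPoly (z : ℂ) :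
    (X * derivative (partitionPoly d n β)).eval z =
      ∑ σ : Config d n, (Nminus σ : ℂ) * ((Real.exp (β * edgeSum d n σ) : ℂ) * z ^ Nminus σ) := by
  have hterm : ∀ (c : ℂ) (k : ℕ), z * (c * (k * z ^ (k - 1))) = k * (c * z ^ k) := by
    rintro c (_ | k)
    · simp
    · simp only [Nat.cast_succ, Nat.add_sub_cancel, pow_succ]
      ring
  simp [partitionPoly, eval_finsetSum, derivative_X_pow, Finset.mul_sum, hterm]

lemma magDen_eq_one_sub (z : ℂ) (hz : (partitionPoly d n β).eval z ≠ 0) :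
    magDen d n β z = 1 - 2 / (Lam d n).card *
      ((X * derivative (partitionPoly d n β)).eval z / (partitionPoly d n β).eval z) := by
  have hN : ((Lam d n).card : ℂ) ≠ 0 := Nat.cast_ne_zero.2 (card_Lam_pos d n).ne'
  have hnum : ∑ σ : Config d n, (Ymag σ : ℂ) * (Real.exp (β * edgeSum d n σ) : ℂ) * z ^ Nminus σ
      = (Lam d n).card * (partitionPoly d n β).eval z
        - 2 * (X * derivative (partitionPoly d n β)).eval z := by
    simp only [eval_partitionPoly, eval_X_mul_derivative_partitionPoly, Finset.mul_sum,
      ← Finset.sum_sub_distrib, Ymag_eq_card_sub_two_mul_Nminus]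
    push_cast
    exact Finset.sum_congr rfl fun σ _ => by ring
  rw [magDen, hnum, ← eval_partitionPoly]
  field_simp

lemma partitionPoly_eq_prod {θ : ℕ → ℝ} (hθ : IsCircleRootListing d n β θ) :
    partitionPoly d n β = C (Real.exp (β * edgeSum d n (fun _ => false)) : ℂ) *
      ∏ j ∈ Finset.range (Lam d n).card, (X - C (Complex.exp (Complex.I * (θ j : ℝ)))) :=
  Polynomial.funext fun z => by
    simpa only [eval_partitionPoly, eval_mul, eval_C, eval_prod, eval_sub, eval_X] using hθ.2.2 z

lemma magDen_eq_mean {θ : ℕ → ℝ} (hθ : IsCircleRootListing d n β θ) {z : ℂ}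
    (hz : ‖z‖ < 1) :
    magDen d n β z = ((Finset.range (Lam d n).card).card : ℂ)⁻¹ *
      ∑ j ∈ Finset.range (Lam d n).card,
        (Complex.exp (Complex.I * (θ j : ℝ)) + z) / (Complex.exp (Complex.I * (θ j : ℝ)) - z) := by
  have hwz : ∀ j, Complex.exp (Complex.I * (θ j : ℝ)) - z ≠ 0 := fun j h => by
    simp [← sub_eq_zero.1 h, Complex.norm_exp] at hz
  have hzw : ∀ j, z - Complex.exp (Complex.I * (θ j : ℝ)) ≠ 0 := fun j h =>
    hwz j (by rw [← neg_sub, h, neg_zero])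
  have hP : (partitionPoly d n β).eval z ≠ 0 := by
    simp only [partitionPoly_eq_prod hθ, eval_mul, eval_C, eval_prod, eval_sub, eval_X]
    exact mul_ne_zero (by simp) (Finset.prod_ne_zero_iff.2 fun j _ => hzw j)
  rw [magDen_eq_one_sub z hP, partitionPoly_eq_prod hθ,
    eval_X_mul_derivative_div_eval (by simp) fun j _ => sub_ne_zero.1 (hzw j),
    Finset.card_range]
  have hterm : ∀ j, (Complex.exp (Complex.I * (θ j : ℝ)) + z) /
      (Complex.exp (Complex.I * (θ j : ℝ)) - z) =
        1 - 2 * (z / (z - Complex.exp (Complex.I * (θ j : ℝ)))) := fun j => by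
    field_simp [hwz j, hzw j]
    ring
  simp only [hterm, Finset.sum_sub_distrib, ← Finset.mul_sum, Finset.sum_const,
    Finset.card_range, nsmul_eq_mul, mul_one]
  field_simp [(card_Lam_pos d n).ne']

end PartitionPoly

theorem statement17_general (d : ℕ) (β : ℝ) (n : ℕ)
    (θ : ℕ → ℝ) (hθ : IsCircleRootListing d n β θ) :
    (∀ z : ℂ, ‖z‖ < 1 → 0 < (magDen d n β z).re) ∧
      magDen d n β 0 = 1 ∧
      ∀ r : ℝ, r < 1 → ∀ z : ℂ, ‖z‖ ≤ r →
        ‖magDen d n β z‖ ≤ (1 + r) / (1 - r) := by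
  have hne : (Finset.range (Lam d n).card).Nonempty :=
    Finset.nonempty_range_iff.2 (card_Lam_pos d n).ne'
  have hw : ∀ j, ‖Complex.exp (Complex.I * (θ j : ℝ))‖ = 1 := fun j => by
    simp [Complex.norm_exp]
  refine ⟨fun z hz => ?_, ?_, fun r hr z hzr => ?_⟩
  · rw [magDen_eq_mean hθ hz]
    exact re_mean_pos hne fun j _ => re_add_div_sub_pos (by rwa [hw])
  · rw [magDen_eq_mean hθ (by simp)]
    simp [(card_Lam_pos d n).ne']
  · rw [magDen_eq_mean hθ (hzr.trans_lt hr)]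
    refine norm_mean_le hne fun j _ => ?_
    simpa only [hw] using
      norm_add_div_sub_le (w := Complex.exp (Complex.I * (θ j : ℝ))) hzr (by rwa [hw])

/-- **`m_{Λ_n}` is a Herglotz function on the unit disk:** `Re m_{Λ_n}(z) > 0` on `𝔻`,
`m_{Λ_n}(0) = 1`, and `|m_{Λ_n}(z)| ≤ (1+r)/(1-r)` for `|z| ≤ r < 1`. -/
theorem statement17 (d : ℕ) (hd : 1 ≤ d) (β : ℝ) (hβ : 0 ≤ β) (n : ℕ)
    (θ : ℕ → ℝ) (hθ : IsCircleRootListing d n β θ) :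
    (∀ z : ℂ, ‖z‖ < 1 → 0 < (magDen d n β z).re) ∧
      magDen d n β 0 = 1 ∧
      ∀ r : ℝ, r < 1 → ∀ z : ℂ, ‖z‖ ≤ r →
        ‖magDen d n β z‖ ≤ (1 + r) / (1 - r) :=
  statement17_general d β n θ hθ

end
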